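/- arXiv:1905.04210 — 2 statements merged into one kernel-verified Lean document; each statement's English description precedes it below -/
import Mathlib

section
/- Let A be a finite type, k : A → ℕ, and F ⊆ (A → ℝ) a set such that the coerced count vector (fun a => (k a : ℝ)) belongs to F (i.e., the count vector of the complete observation sequence, which is itself a plan for the actual goal, is feasible for the operator-counting constraints of that goal). Then, with unit costs, the infimum in the extended nonnegative reals of ∑_{a} Y a over the hard-constrained set F_hc = {Y ∈ F | ∀ a, (k a : ℝ) ≤ Y a} is exactly ∑_{a} k a = |O|; that is, h_hc of the actual goal under 100% observability equals the number of observations. -/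
open scoped ENNReal BigOperators

/-- Under 100% observability, if the count vector of the observation sequence is feasible
for the actual goal's constraints, then with unit costs `h_hc` equals exactly `|O|`. -/
theorem hhc_eq_card_obs_of_full_obs {A : Type*} [Fintype A] (k : A → ℕ) (F : Set (A → ℝ))
    (hF : (fun a => (k a : ℝ)) ∈ F) :
    (⨅ Y ∈ {Y ∈ F | ∀ a, (k a : ℝ) ≤ Y a}, ENNReal.ofReal (∑ a, Y a)) =
      ((∑ a, k a : ℕ) : ℝ≥0∞) := by
  apply le_antisymm
  · have hmem : (fun a => (k a : ℝ)) ∈ {Y ∈ F | ∀ a, (k a : ℝ) ≤ Y a} :=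
      ⟨hF, fun a => le_refl _⟩
    calc (⨅ Y ∈ {Y ∈ F | ∀ a, (k a : ℝ) ≤ Y a}, ENNReal.ofReal (∑ a, Y a))
        ≤ ENNReal.ofReal (∑ a, (k a : ℝ)) := biInf_le _ hmem
      _ = ((∑ a, k a : ℕ) : ℝ≥0∞) := by
          rw [← Nat.cast_sum, ENNReal.ofReal_natCast]
  · refine le_iInf₂ fun Y hY => ?_
    have h1 : ((∑ a, k a : ℕ) : ℝ) ≤ ∑ a, Y a := by
      push_cast
      exact Finset.sum_le_sum fun a _ => hY.2 a
    calc ((∑ a, k a : ℕ) : ℝ≥0∞) = ENNReal.ofReal ((∑ a, k a : ℕ) : ℝ) := by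
          rw [ENNReal.ofReal_natCast]
      _ ≤ ENNReal.ofReal (∑ a, Y a) := ENNReal.ofReal_le_ofReal h1
end

section
/- Let A be a finite type, k : A → ℕ with |O| = ∑_a k a, let 𝒢 be a finite nonempty index type of goal hypotheses, and for each G ∈ 𝒢 let F(G) ⊆ (A → ℝ) be the feasible set of the operator-counting constraints for goal G, with hard-constrained set F_hc(G) = {Y ∈ F(G) | ∀ a, (k a : ℝ) ≤ Y a} and, with unit costs, h_hc(G) = ⨅ over Y ∈ F_hc(G) of ∑_{a} Y a in the extended nonnegative reals (inf ∅ = +∞). Suppose the actual goal G* satisfies that the coerced count vector (fun a => (k a : ℝ)) belongs to F(G*) (the full observation sequence is a plan for G* feasible for its constraints). Then h_hc(G*) = |O| = min over G ∈ 𝒢 of h_hc(G); in particular G* belongs to the set {G ∈ 𝒢 | h_hc(G) ≤ min_{G'} h_hc(G')} of goals returned by the recognition algorithm, i.e., the set of goals returned by h_hc with 100% of the observations always contains the actual goal. -/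
open scoped ENNReal BigOperators

/-- The set of goals returned by `h_hc` with 100% of the observations always contains the
actual goal: `h_hc(G*) = |O|` is the minimum over all goal hypotheses. -/
theorem actual_goal_recognized {A : Type*} [Fintype A] {𝒢 : Type*} [Fintype 𝒢] [Nonempty 𝒢]
    (k : A → ℕ) (F : 𝒢 → Set (A → ℝ)) (Gstar : 𝒢)
    (hGstar : (fun a => (k a : ℝ)) ∈ F Gstar)
    (hhc : 𝒢 → ℝ≥0∞)
    (hdef : ∀ G, hhc G =
      ⨅ Y ∈ {Y ∈ F G | ∀ a, (k a : ℝ) ≤ Y a}, ENNReal.ofReal (∑ a, Y a)) :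
    hhc Gstar = ((∑ a, k a : ℕ) : ℝ≥0∞) ∧
      hhc Gstar = (⨅ G, hhc G) ∧
      Gstar ∈ {G | hhc G ≤ ⨅ G', hhc G'} := by
  have hub : ∀ G, ((∑ a, k a : ℕ) : ℝ≥0∞) ≤ hhc G := by
    intro G
    rw [hdef G]
    refine le_iInf₂ fun Y hY => ?_
    have h1 : ((∑ a, k a : ℕ) : ℝ) ≤ ∑ a, Y a := by
      push_cast
      exact Finset.sum_le_sum fun a _ => hY.2 a
    calc ((∑ a, k a : ℕ) : ℝ≥0∞) = ENNReal.ofReal ((∑ a, k a : ℕ) : ℝ) := by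
          rw [ENNReal.ofReal_natCast]
      _ ≤ ENNReal.ofReal (∑ a, Y a) := ENNReal.ofReal_le_ofReal h1
  have hle : hhc Gstar ≤ ((∑ a, k a : ℕ) : ℝ≥0∞) := by
    rw [hdef Gstar]
    have hmem : (fun a => (k a : ℝ)) ∈ {Y ∈ F Gstar | ∀ a, (k a : ℝ) ≤ Y a} :=
      ⟨hGstar, fun a => le_refl _⟩
    calc (⨅ Y ∈ {Y ∈ F Gstar | ∀ a, (k a : ℝ) ≤ Y a}, ENNReal.ofReal (∑ a, Y a))
        ≤ ENNReal.ofReal (∑ a, ((k a : ℝ))) := biInf_le _ hmem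
      _ = ((∑ a, k a : ℕ) : ℝ≥0∞) := by
          push_cast
          rw [ENNReal.ofReal_sum_of_nonneg fun a _ => Nat.cast_nonneg _]
          simp [ENNReal.ofReal_natCast]
  have heq : hhc Gstar = ((∑ a, k a : ℕ) : ℝ≥0∞) := le_antisymm hle (hub Gstar)
  have hmin : hhc Gstar = ⨅ G, hhc G :=
    le_antisymm (le_iInf fun G => heq ▸ hub G) (iInf_le _ _)
  exact ⟨heq, hmin, hmin.le⟩
end
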